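/- Let X be a locally compact Hausdorff space, k : X × X → [0,∞] a lower semicontinuous symmetric kernel, and let ∅ ≠ H ⊆ L ⊆ X. Then the average set A(H,L), the rendezvous set R(H,L), and each n-th rendezvous set R_n(H,L) (n ≥ 1) are nonempty subsets of [0,∞]. -/

import Mathlib

open MeasureTheory Set ENNReal Filter

variable {X : Type*}

/-- The potential `U^μ(x) = ∫ k(x,y) dμ(y)` of a measure `μ` with respect to the kernel `k`. -/
noncomputable def potential [MeasurableSpace X] (k : X → X → ℝ≥0∞) (μ : Measure X) (x : X) :
    ℝ≥0∞ :=
  ∫⁻ y, k x y ∂μ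

/-- `M1 H` : the regular Borel probability measures concentrated on `H`
(i.e. with outer measure of `H` equal to `1`). -/
def M1 [TopologicalSpace X] [MeasurableSpace X] (H : Set X) : Set (Measure X) :=
  {μ | IsProbabilityMeasure μ ∧ μ.Regular ∧ μ H = 1}

/-- `M1sharp H` : finite convex combinations of Dirac measures at points of `H`. -/
def M1sharp [MeasurableSpace X] (H : Set X) : Set (Measure X) :=
  {μ | ∃ (n : ℕ) (w : Fin n → X) (α : Fin n → ℝ≥0∞),
    (∀ j, w j ∈ H) ∧ (∑ j, α j = 1) ∧ μ = ∑ j, α j • Measure.dirac (w j)}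

/-- The quasi-uniform energy `q(H,L)`. -/
noncomputable def qEnergy [TopologicalSpace X] [MeasurableSpace X] (k : X → X → ℝ≥0∞)
    (H L : Set X) : ℝ≥0∞ :=
  ⨅ μ ∈ M1 H, ⨆ x ∈ L, potential k μ x

/-- The restricted quasi-uniform energy `q^#(H,L)`. -/
noncomputable def qEnergySharp [MeasurableSpace X] (k : X → X → ℝ≥0∞) (H L : Set X) : ℝ≥0∞ :=
  ⨅ μ ∈ M1sharp H, ⨆ x ∈ L, potential k μ x

/-- The dual energy `q̲(H,L)`. -/
noncomputable def qEnergyLow [TopologicalSpace X] [MeasurableSpace X] (k : X → X → ℝ≥0∞)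
    (H L : Set X) : ℝ≥0∞ :=
  ⨆ μ ∈ M1 H, ⨅ x ∈ L, potential k μ x

/-- The restricted dual energy `q̲^#(H,L)`. -/
noncomputable def qEnergyLowSharp [MeasurableSpace X] (k : X → X → ℝ≥0∞) (H L : Set X) : ℝ≥0∞ :=
  ⨆ μ ∈ M1sharp H, ⨅ x ∈ L, potential k μ x

/-- The `n`-th Chebyshev constant `M_n(H,L)`. -/
noncomputable def chebM (k : X → X → ℝ≥0∞) (H L : Set X) (n : ℕ) : ℝ≥0∞ :=
  ⨆ (w : Fin n → X) (_ : ∀ j, w j ∈ H), ⨅ x ∈ L, (∑ j, k x (w j)) / (n : ℝ≥0∞)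

/-- The `n`-th dual Chebyshev constant `M̄_n(H,L)`. -/
noncomputable def chebMbar (k : X → X → ℝ≥0∞) (H L : Set X) (n : ℕ) : ℝ≥0∞ :=
  ⨅ (w : Fin n → X) (_ : ∀ j, w j ∈ H), ⨆ x ∈ L, (∑ j, k x (w j)) / (n : ℝ≥0∞)

/-- The `n`-th diameter `D_n(H)`. -/
noncomputable def diamN (k : X → X → ℝ≥0∞) (H : Set X) (n : ℕ) : ℝ≥0∞ :=
  ⨅ (w : Fin n → X) (_ : ∀ j, w j ∈ H),
    (2 * ∑ p ∈ Finset.univ.filter (fun p : Fin n × Fin n => p.1 < p.2), k (w p.1) (w p.2)) /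
      ((n : ℝ≥0∞) * ((n : ℝ≥0∞) - 1))

/-- The `n`-th rendezvous set `R_n(H,L)`. -/
noncomputable def rendezvousN (k : X → X → ℝ≥0∞) (H L : Set X) (n : ℕ) : Set ℝ≥0∞ :=
  ⋂ (w : Fin n → X) (_ : ∀ j, w j ∈ H),
    Icc (⨅ x ∈ L, (∑ j, k x (w j)) / (n : ℝ≥0∞)) (⨆ x ∈ L, (∑ j, k x (w j)) / (n : ℝ≥0∞))

/-- The rendezvous set `R(H,L) = ⋂_{n ≥ 1} R_n(H,L)`. -/
noncomputable def rendezvous (k : X → X → ℝ≥0∞) (H L : Set X) : Set ℝ≥0∞ :=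
  ⋂ n : ℕ, rendezvousN k H L (n + 1)

/-- The average set `A(H,L)`. -/
noncomputable def averageSet [TopologicalSpace X] [MeasurableSpace X] (k : X → X → ℝ≥0∞)
    (H L : Set X) : Set ℝ≥0∞ :=
  ⋂ μ ∈ M1 H, Icc (⨅ x ∈ L, potential k μ x) (⨆ x ∈ L, potential k μ x)

/-!
Let `a = sup_μ inf_L U^μ`, the supremum running over inner regular probability measures
concentrated on `H`. The average `p` of a configuration in `H` is the potential of its empirical
measure, which is such a measure, so `a` lies in all the intervals once `inf_L U^μ ≤ sup_L U^ν`
for any two such `μ, ν`. This follows from `inf_H U^μ ≤ ∫ U^μ dν ≤ ∫ U^ν dμ ≤ sup_H U^ν`, the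
middle step being Tonelli's theorem for the symmetric kernel `k`. As `k` is only Borel on `X × X`,
which may be finer than the product σ-algebra, Tonelli is replaced by a one-sided version proved
from lower semicontinuity and inner regularity: by the tube lemma, near each point `x₀` the
functions `k(x, ·)` all dominate one measurable function (a local minorant) whose integral is
close to that of `k(x₀, ·)`.
-/

open Topology

section Superadditive

variable [MeasurableSpace X]

def IsSuperadditive (Φ : Set X → ℝ≥0∞) : Prop :=
  ∀ ⦃S T : Set X⦄, MeasurableSet S → MeasurableSet T → Disjoint S T → Φ S + Φ T ≤ Φ (S ∪ T)

theorem mul_measure_le_of_subset_biUnion {ν : Measure X} {Φ : Set X → ℝ≥0∞}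
    (hΦ : IsSuperadditive Φ) {b : ℝ≥0∞} {ι : Type*} (t : Finset ι) (W : ι → Set X)
    (hW : ∀ i ∈ t, MeasurableSet (W i))
    (hloc : ∀ i ∈ t, ∀ S ⊆ W i, MeasurableSet S → b * ν S ≤ Φ S)
    {S : Set X} (hS : MeasurableSet S) (hSW : S ⊆ ⋃ i ∈ t, W i) : b * ν S ≤ Φ S := by
  classical
  induction t using Finset.induction_on generalizing S with
  | empty => simp [subset_empty_iff.1 (by simpa using hSW)]
  | insert a t ha ih =>
    simp only [Finset.mem_insert, forall_eq_or_imp] at hW hloc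
    have hrest : S \ W a ⊆ ⋃ i ∈ t, W i := fun x hx => by
      simpa [hx.2] using hSW hx.1
    calc b * ν S = b * ν (S ∩ W a) + b * ν (S \ W a) := by
          rw [← mul_add, measure_inter_add_sdiff S hW.1]
      _ ≤ Φ (S ∩ W a) + Φ (S \ W a) :=
          add_le_add (hloc.1 _ inter_subset_right (hS.inter hW.1))
            (ih hW.2 hloc.2 (hS.diff hW.1) hrest)
      _ ≤ Φ S := by
          simpa only [inter_union_sdiff] using
            hΦ (hS.inter hW.1) (hS.diff hW.1) (disjoint_sdiff_inter.symm.mono_left le_rfl)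

theorem isSuperadditive_lintegral_setLIntegral (k : X → X → ℝ≥0∞) (μ ν : Measure X) :
    IsSuperadditive fun S => ∫⁻ y, ∫⁻ x in S, k x y ∂ν ∂μ := by
  intro S T _ hT hST
  simp only [lintegral_union hT hST]
  exact le_lintegral_add _ _

end Superadditive

theorem lintegral_le_of_isSuperadditive [TopologicalSpace X] [MeasurableSpace X]
    {ν : Measure X} [ν.InnerRegular] {Φ : Set X → ℝ≥0∞} (hmono : Monotone Φ)
    (hΦ : IsSuperadditive Φ) {f : X → ℝ≥0∞}
    (hcompact : ∀ K c, IsCompact K → (∀ x ∈ K, c < f x) → c * ν K ≤ Φ K) :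
    ∫⁻ x, f x ∂ν ≤ Φ univ := by
  rw [lintegral_eq_nnreal]
  refine iSup₂_le fun φ hφf => ?_
  rw [← SimpleFunc.lintegral_eq_lintegral, SimpleFunc.coe_map]
  refine le_trans ?_ (hmono (subset_univ (Function.support φ)))
  induction φ using SimpleFunc.induction with
  | @const c s hs =>
    set φ := SimpleFunc.piecewise s hs (SimpleFunc.const X c) (SimpleFunc.const X 0)
    have hφs : ∀ x ∈ s, φ x = c := fun x hx => by simp [φ, hx]
    have hint : ∫⁻ x, (φ x : ℝ≥0∞) ∂ν = c * ν s := by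
      simp [φ, piecewise_eq_indicator, lintegral_indicator hs]
    rw [Function.comp_def, hint]
    refine ENNReal.mul_le_of_forall_lt fun c' hc' m hm => ?_
    obtain ⟨K, hKs, hK, hmK⟩ := hs.exists_lt_isCompact hm
    have hKφ : K ⊆ Function.support φ := fun x hx => by
      rw [Function.mem_support, hφs x (hKs hx)]
      rintro rfl
      simp at hc'
    calc c' * m ≤ c' * ν K := by gcongr
      _ ≤ Φ K := hcompact K c' hK fun x hx =>
          hc'.trans_le (by simpa [hφs x (hKs hx)] using hφf x)
      _ ≤ Φ (Function.support φ) := hmono hKφ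
  | @add φ₁ φ₂ hdisj h₁ h₂ =>
    have hsupp : Function.support φ₁ ∪ Function.support φ₂ ⊆ Function.support (φ₁ + φ₂) := by
      rintro x (hx | hx) <;> simp_all [Function.mem_support]
    calc ∫⁻ x, (ofNNReal ∘ ⇑(φ₁ + φ₂)) x ∂ν = ∫⁻ x, φ₁ x ∂ν + ∫⁻ x, φ₂ x ∂ν := by
          simp [lintegral_add_left φ₁.measurable.coe_nnreal_ennreal]
      _ ≤ Φ (Function.support φ₁) + Φ (Function.support φ₂) :=
          add_le_add (h₁ fun x => le_trans (by simp) (hφf x))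
            (h₂ fun x => le_trans (by simp) (hφf x))
      _ ≤ Φ (Function.support (φ₁ + φ₂)) :=
          (hΦ φ₁.measurableSet_support φ₂.measurableSet_support hdisj).trans (hmono hsupp)

section LocalMinorant

variable [TopologicalSpace X] [MeasurableSpace X]

def IsLocalMinorant (k : X → X → ℝ≥0∞) (x₀ : X) (ρ : X → ℝ≥0∞) : Prop :=
  Measurable ρ ∧ ∀ᶠ x in 𝓝 x₀, ρ ≤ k x

theorem IsLocalMinorant.add {k : X → X → ℝ≥0∞} {x₀ : X} {ρ₁ ρ₂ : X → ℝ≥0∞}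
    (h₁ : IsLocalMinorant k x₀ ρ₁) (h₂ : IsLocalMinorant k x₀ ρ₂)
    (hdisj : Disjoint (Function.support ρ₁) (Function.support ρ₂)) :
    IsLocalMinorant k x₀ (ρ₁ + ρ₂) := by
  refine ⟨h₁.1.add h₂.1, ?_⟩
  filter_upwards [h₁.2, h₂.2] with x hx₁ hx₂ y
  by_cases hy : y ∈ Function.support ρ₁
  · simpa [Function.notMem_support.1 (hdisj.notMem_of_mem_left hy)] using hx₁ y
  · simpa [Function.notMem_support.1 hy] using hx₂ y

theorem isLocalMinorant_indicator [OpensMeasurableSpace X] [T2Space X] {k : X → X → ℝ≥0∞}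
    (hk : LowerSemicontinuous fun p : X × X => k p.1 p.2) {x₀ : X} {K : Set X} (hK : IsCompact K)
    {c : ℝ≥0∞} (hc : ∀ y ∈ K, c < k x₀ y) :
    IsLocalMinorant k x₀ (K.indicator fun _ => c) := by
  refine ⟨measurable_const.indicator hK.measurableSet, ?_⟩
  have hnear : ∀ᶠ x in 𝓝 x₀, ∀ y ∈ K, c < k x y :=
    hK.eventually_forall_of_forall_eventually (P := fun x y => c < k x y) fun y hy =>
      hk (x₀, y) c (hc y hy)
  filter_upwards [hnear] with x hx y
  by_cases hy : y ∈ K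
  · simpa [hy] using (hx y hy).le
  · simp [hy]

theorem lintegral_le_iSup_isLocalMinorant [OpensMeasurableSpace X] [T2Space X]
    {k : X → X → ℝ≥0∞} (hk : LowerSemicontinuous fun p : X × X => k p.1 p.2)
    (μ : Measure X) [μ.InnerRegular] (x₀ : X) :
    ∫⁻ y, k x₀ y ∂μ ≤ ⨆ (ρ) (_ : IsLocalMinorant k x₀ ρ), ∫⁻ y, ρ y ∂μ := by
  set Ψ : Set X → ℝ≥0∞ := fun S =>
    ⨆ (ρ) (_ : IsLocalMinorant k x₀ ρ ∧ Function.support ρ ⊆ S), ∫⁻ y, ρ y ∂μ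
  have hmono : Monotone Ψ := fun S T hST =>
    biSup_mono fun ρ hρ => ⟨hρ.1, hρ.2.trans hST⟩
  have hΨ : IsSuperadditive Ψ := by
    intro S T _ _ hST
    have h0 : ∀ U, IsLocalMinorant k x₀ 0 ∧ Function.support (0 : X → ℝ≥0∞) ⊆ U := fun U =>
      ⟨⟨measurable_const, .of_forall fun x => zero_le⟩, by simp⟩
    refine ENNReal.biSup_add_biSup_le' ⟨0, h0 S⟩ ⟨0, h0 T⟩ fun ρ₁ h₁ ρ₂ h₂ => ?_
    rw [← lintegral_add_left h₁.1.1]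
    exact le_iSup₂_of_le (ρ₁ + ρ₂)
      ⟨h₁.1.add h₂.1 (hST.mono h₁.2 h₂.2),
        (Function.support_add _ _).trans (union_subset_union h₁.2 h₂.2)⟩ le_rfl
  refine (lintegral_le_of_isSuperadditive hmono hΨ fun K c hK hc => ?_).trans
    (biSup_mono fun ρ hρ => hρ.1)
  rw [← lintegral_indicator_const hK.measurableSet]
  exact le_iSup₂_of_le (K.indicator fun _ => c)
    ⟨isLocalMinorant_indicator hk hK hc, support_indicator_subset⟩ le_rfl

end LocalMinorant

section Potential

variable [TopologicalSpace X] [MeasurableSpace X] [OpensMeasurableSpace X] [T2Space X]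
  {k : X → X → ℝ≥0∞}

theorem lowerSemicontinuous_potential (hk : LowerSemicontinuous fun p : X × X => k p.1 p.2)
    (μ : Measure X) [μ.InnerRegular] : LowerSemicontinuous (potential k μ) := by
  intro x₀ c hc
  obtain ⟨ρ, hρ, hcρ⟩ : ∃ ρ, IsLocalMinorant k x₀ ρ ∧ c < ∫⁻ y, ρ y ∂μ := by
    simpa only [lt_iSup_iff, exists_prop] using
      hc.trans_le (lintegral_le_iSup_isLocalMinorant hk μ x₀)
  filter_upwards [hρ.2] with x hx using hcρ.trans_le (lintegral_mono hx)

theorem mul_measure_le_lintegral_setLIntegral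
    (hk : LowerSemicontinuous fun p : X × X => k p.1 p.2) (μ ν : Measure X) [μ.InnerRegular]
    {C : Set X} (hC : IsCompact C) {b : ℝ≥0∞} (hb : ∀ x ∈ C, b < ∫⁻ y, k x y ∂μ) :
    b * ν C ≤ ∫⁻ y, ∫⁻ x in C, k x y ∂ν ∂μ := by
  have hloc : ∀ x ∈ C, ∃ ρ, IsLocalMinorant k x ρ ∧ b < ∫⁻ y, ρ y ∂μ := fun x hx => by
    simpa only [lt_iSup_iff, exists_prop] using
      (hb x hx).trans_le (lintegral_le_iSup_isLocalMinorant hk μ x)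
  choose! ρ hρ hbρ using hloc
  obtain ⟨t, htC, hCt⟩ := hC.elim_nhds_subcover (fun x => interior {x' | ρ x ≤ k x'})
    fun x hx => interior_mem_nhds.2 (hρ x hx).2
  refine mul_measure_le_of_subset_biUnion (isSuperadditive_lintegral_setLIntegral k μ ν) t _
    (fun x _ => isOpen_interior.measurableSet) (fun x hx S hS hSm => ?_) hC.measurableSet hCt
  calc b * ν S ≤ (∫⁻ y, ρ x y ∂μ) * ν S := by gcongr; exact (hbρ x (htC x hx)).le
    _ = ∫⁻ y, ∫⁻ _ in S, ρ x y ∂ν ∂μ := by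
        simp only [setLIntegral_const]
        rw [lintegral_mul_const _ (hρ x (htC x hx)).1]
    _ ≤ ∫⁻ y, ∫⁻ x' in S, k x' y ∂ν ∂μ :=
        lintegral_mono fun y => setLIntegral_mono' hSm fun x' hx' => interior_subset (hS hx') y

theorem lintegral_lintegral_swap_le (hk : LowerSemicontinuous fun p : X × X => k p.1 p.2)
    (μ ν : Measure X) [μ.InnerRegular] [ν.InnerRegular] :
    ∫⁻ x, ∫⁻ y, k x y ∂μ ∂ν ≤ ∫⁻ y, ∫⁻ x, k x y ∂ν ∂μ := by
  simpa only [Measure.restrict_univ] using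
    lintegral_le_of_isSuperadditive (ν := ν) (f := fun x => ∫⁻ y, k x y ∂μ)
      (fun S T h => lintegral_mono fun y => lintegral_mono_set h)
      (isSuperadditive_lintegral_setLIntegral k μ ν)
      fun K c hK hc => mul_measure_le_lintegral_setLIntegral hk μ ν hK hc

end Potential

section Concentrated

variable [MeasurableSpace X] {ν : Measure X} [IsProbabilityMeasure ν] {H : Set X}

theorem ae_mem_of_measure_eq_one (hν : ν H = 1) {T : Set X} (hT : MeasurableSet T)
    (hHT : H ⊆ T) : ∀ᵐ x ∂ν, x ∈ T :=
  (prob_compl_eq_zero_iff hT).2 (le_antisymm prob_le_one (hν ▸ measure_mono hHT))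

theorem biInf_le_lintegral_of_measure_eq_one (hν : ν H = 1) {f : X → ℝ≥0∞}
    (hf : Measurable f) : ⨅ x ∈ H, f x ≤ ∫⁻ x, f x ∂ν := by
  have hae := ae_mem_of_measure_eq_one hν (measurableSet_le measurable_const hf)
    fun x hx => biInf_le f hx
  simpa using lintegral_mono_ae hae

theorem lintegral_le_biSup_of_measure_eq_one (hν : ν H = 1) {f : X → ℝ≥0∞}
    (hf : Measurable f) : ∫⁻ x, f x ∂ν ≤ ⨆ x ∈ H, f x := by
  have hae := ae_mem_of_measure_eq_one hν (measurableSet_le hf measurable_const)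
    fun x hx => le_biSup f hx
  simpa using lintegral_mono_ae hae

end Concentrated

theorem biSup_mem_biInter_Icc {α ι : Type*} [CompleteLattice α] {s : Set ι} {f g : ι → α}
    (h : ∀ i ∈ s, ∀ j ∈ s, f i ≤ g j) : ⨆ i ∈ s, f i ∈ ⋂ i ∈ s, Icc (f i) (g i) :=
  mem_iInter₂.2 fun i hi => ⟨le_biSup f hi, iSup₂_le fun j hj => h j hj i hi⟩

section Empirical

variable [MeasurableSpace X]

noncomputable def empiricalMeasure {n : ℕ} (w : Fin n → X) : Measure X :=
  (n : ℝ≥0∞)⁻¹ • ∑ j, Measure.dirac (w j)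

theorem potential_empiricalMeasure [MeasurableSingletonClass X] (k : X → X → ℝ≥0∞) {n : ℕ}
    (w : Fin n → X) (x : X) :
    potential k (empiricalMeasure w) x = (∑ j, k x (w j)) / n := by
  simp [potential, empiricalMeasure, ENNReal.div_eq_inv_mul]

end Empirical

section InnerRegularProbability

variable [TopologicalSpace X] [MeasurableSpace X]

def M1InnerRegular (H : Set X) : Set (Measure X) :=
  {μ | IsProbabilityMeasure μ ∧ μ.InnerRegular ∧ μ H = 1}

theorem M1_subset_M1InnerRegular (H : Set X) : M1 H ⊆ M1InnerRegular H :=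
  fun _ ⟨hprob, _, hH⟩ => ⟨hprob, inferInstance, hH⟩

instance Measure.innerRegular_dirac [MeasurableSingletonClass X] (a : X) :
    (Measure.dirac a).InnerRegular := by
  refine ⟨fun A hA r hr => ⟨{a}, ?_, isCompact_singleton, ?_⟩⟩
  · by_cases ha : a ∈ A
    · exact singleton_subset_iff.2 ha
    · simp [ha] at hr
  · simpa using hr.trans_le prob_le_one

theorem empiricalMeasure_mem_M1InnerRegular [MeasurableSingletonClass X] {H : Set X} {n : ℕ}
    (hn : n ≠ 0) {w : Fin n → X} (hw : ∀ j, w j ∈ H) : empiricalMeasure w ∈ M1InnerRegular H := by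
  refine ⟨⟨?_⟩, by unfold empiricalMeasure; infer_instance, ?_⟩ <;>
    simp [empiricalMeasure, hw, ENNReal.inv_mul_cancel, hn]

theorem biInf_potential_le_biSup_potential [OpensMeasurableSpace X] [T2Space X]
    {k : X → X → ℝ≥0∞} (hk : LowerSemicontinuous fun p : X × X => k p.1 p.2)
    (hsymm : ∀ x y, k x y = k y x) {H L : Set X} (hHL : H ⊆ L) {μ ν : Measure X}
    (hμ : μ ∈ M1InnerRegular H) (hν : ν ∈ M1InnerRegular H) :
    ⨅ x ∈ L, potential k μ x ≤ ⨆ x ∈ L, potential k ν x := by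
  obtain ⟨_, _, hμH⟩ := hμ
  obtain ⟨_, _, hνH⟩ := hν
  calc ⨅ x ∈ L, potential k μ x ≤ ⨅ x ∈ H, potential k μ x := biInf_mono hHL
    _ ≤ ∫⁻ x, potential k μ x ∂ν :=
        biInf_le_lintegral_of_measure_eq_one hνH (lowerSemicontinuous_potential hk μ).measurable
    _ ≤ ∫⁻ y, ∫⁻ x, k x y ∂ν ∂μ := lintegral_lintegral_swap_le hk μ ν
    _ = ∫⁻ y, potential k ν y ∂μ := by simp only [potential, hsymm _ _]
    _ ≤ ⨆ x ∈ H, potential k ν x :=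
        lintegral_le_biSup_of_measure_eq_one hμH (lowerSemicontinuous_potential hk ν).measurable
    _ ≤ ⨆ x ∈ L, potential k ν x := biSup_mono hHL

end InnerRegularProbability

theorem rendezvous_sets_nonempty_general
    {X : Type*} [TopologicalSpace X] [T2Space X]
    [MeasurableSpace X] [BorelSpace X]
    (k : X → X → ℝ≥0∞)
    (hk : LowerSemicontinuous fun p : X × X => k p.1 p.2)
    (hksymm : ∀ x y, k x y = k y x)
    (H L : Set X) (hHL : H ⊆ L) :
    (averageSet k H L).Nonempty ∧ (rendezvous k H L).Nonempty ∧
    ∀ n : ℕ, 1 ≤ n → (rendezvousN k H L n).Nonempty := by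
  set a := ⨆ μ ∈ M1InnerRegular H, ⨅ x ∈ L, potential k μ x
  have ha : a ∈ ⋂ μ ∈ M1InnerRegular H,
      Icc (⨅ x ∈ L, potential k μ x) (⨆ x ∈ L, potential k μ x) :=
    biSup_mem_biInter_Icc fun μ hμ ν hν => biInf_potential_le_biSup_potential hk hksymm hHL hμ hν
  have haN : ∀ n, 1 ≤ n → a ∈ rendezvousN k H L n := fun n hn =>
    mem_iInter₂.2 fun w hw => by
      simpa only [potential_empiricalMeasure] using
        mem_iInter₂.1 ha _ (empiricalMeasure_mem_M1InnerRegular (by omega) hw)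
  exact ⟨⟨a, biInter_subset_biInter_left (M1_subset_M1InnerRegular H) ha⟩,
    ⟨a, mem_iInter.2 fun n => haN (n + 1) n.succ_pos⟩, fun n hn => ⟨a, haN n hn⟩⟩

/-- For `∅ ≠ H ⊆ L ⊆ X`, the sets `A(H,L)`, `R(H,L)` and `R_n(H,L)` (`n ≥ 1`)
are all nonempty. -/
theorem rendezvous_sets_nonempty
    {X : Type*} [TopologicalSpace X] [LocallyCompactSpace X] [T2Space X]
    [MeasurableSpace X] [BorelSpace X]
    (k : X → X → ℝ≥0∞)
    (hk : LowerSemicontinuous fun p : X × X => k p.1 p.2)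
    (hksymm : ∀ x y, k x y = k y x)
    (H L : Set X) (hH : H.Nonempty) (hHL : H ⊆ L) :
    (averageSet k H L).Nonempty ∧ (rendezvous k H L).Nonempty ∧
    ∀ n : ℕ, 1 ≤ n → (rendezvousN k H L n).Nonempty :=
  rendezvous_sets_nonempty_general k hk hksymm H L hHL
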